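/- Let Γ be a finite normal-form game, {f^λ}_{λ∈ℕ} a sequence of profiles of control cost functions that vanishes (i.e., for each player i and each x∈(0,1], f^λ_i(x) → 0 as λ→∞), and {σ^λ}_{λ∈ℕ} a convergent sequence of interior strategy profiles such that for each λ, σ^λ satisfies the first-order equilibrium conditions of the control cost game associated with Γ and f^λ: for each player i and each pair of actions a_l, a_k ∈ A_i, U_i(σ^λ_{-i},a_l) − U_i(σ^λ_{-i},a_k) = (f^λ_i)'(σ^λ_i(a_l)) − (f^λ_i)'(σ^λ_i(a_k)). Then the limit of {σ^λ} is a Nash equilibrium of Γ. -/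
import Mathlib


open Filter Topology

section GameDefs

variable {N : Type} [Fintype N] [DecidableEq N] {A : N → Type}
  [∀ i, Fintype (A i)] [∀ i, DecidableEq (A i)]

/-- A mixed-strategy profile: each `σ i` is a probability distribution on `A i`. -/
def IsStrategy (σ : ∀ i, A i → ℝ) : Prop :=
  (∀ i a, 0 ≤ σ i a) ∧ ∀ i, ∑ a, σ i a = 1

/-- An interior profile places positive probability on every action. -/
def Interior (σ : ∀ i, A i → ℝ) : Prop :=
  ∀ i a, 0 < σ i a

/-- Expected utility of player `i` at profile `σ`. -/
noncomputable def expUtil (u : ∀ i : N, (∀ j, A j) → ℝ) (σ : ∀ i, A i → ℝ) (i : N) : ℝ :=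
  ∑ a : ∀ j, A j, u i a * ∏ j, σ j (a j)

/-- Expected utility of player `i` from playing action `ai` against `σ₋ᵢ`. -/
noncomputable def devUtil (u : ∀ i : N, (∀ j, A j) → ℝ) (σ : ∀ i, A i → ℝ)
    (i : N) (ai : A i) : ℝ :=
  expUtil u (Function.update σ i (fun b => if b = ai then (1 : ℝ) else 0)) i

/-- Nash equilibrium. -/
def IsNash (u : ∀ i : N, (∀ j, A j) → ℝ) (σ : ∀ i, A i → ℝ) : Prop :=
  IsStrategy σ ∧ ∀ (i : N) (μ : A i → ℝ), (∀ a, 0 ≤ μ a) → (∑ a, μ a = 1) →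
    expUtil u (Function.update σ i μ) i ≤ expUtil u σ i

/-- Weak payoff monotonicity: differences in behavior reveal differences in payoffs. -/
def WeaklyPayoffMonotone (u : ∀ i : N, (∀ j, A j) → ℝ) (σ : ∀ i, A i → ℝ) : Prop :=
  IsStrategy σ ∧ ∀ (i : N) (ai bi : A i), σ i bi < σ i ai →
    devUtil u σ i bi < devUtil u σ i ai

/-- Payoff monotonicity. -/
def PayoffMonotone (u : ∀ i : N, (∀ j, A j) → ℝ) (σ : ∀ i, A i → ℝ) : Prop :=
  IsStrategy σ ∧ ∀ (i : N) (ai bi : A i),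
    σ i bi ≤ σ i ai ↔ devUtil u σ i bi ≤ devUtil u σ i ai

/-- Pointwise convergence of a sequence of profiles. -/
def ConvergesTo (s : ℕ → ∀ i, A i → ℝ) (σ : ∀ i, A i → ℝ) : Prop :=
  ∀ (i : N) (ai : A i), Tendsto (fun n => s n i ai) atTop (𝓝 (σ i ai))

/-- Empirical equilibrium: a Nash equilibrium that is the limit of weakly payoff
monotone profiles. -/
def IsEmpirical (u : ∀ i : N, (∀ j, A j) → ℝ) (σ : ∀ i, A i → ℝ) : Prop :=
  IsNash u σ ∧ ∃ s : ℕ → ∀ i, A i → ℝ,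
    (∀ n, WeaklyPayoffMonotone u (s n)) ∧ ConvergesTo s σ

/-- Proper equilibrium (Myerson). -/
def IsProper (u : ∀ i : N, (∀ j, A j) → ℝ) (σ : ∀ i, A i → ℝ) : Prop :=
  IsStrategy σ ∧ ∃ s : ℕ → ∀ i, A i → ℝ,
    (∀ n, IsStrategy (s n) ∧ Interior (s n) ∧
      ∀ (i : N) (ai bi : A i),
        devUtil u (s n) i bi < devUtil u (s n) i ai →
          s n i bi ≤ (1 / (n + 1) : ℝ) * s n i ai) ∧
    ConvergesTo s σ

/-- Perfect equilibrium (Selten, in Myerson's formulation). -/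
def IsPerfect (u : ∀ i : N, (∀ j, A j) → ℝ) (σ : ∀ i, A i → ℝ) : Prop :=
  IsStrategy σ ∧ ∃ s : ℕ → ∀ i, A i → ℝ,
    (∀ n, IsStrategy (s n) ∧ Interior (s n) ∧
      ∀ (i : N) (ai : A i), (1 / (n + 1) : ℝ) < s n i ai →
        ∀ bi : A i, devUtil u (s n) i bi ≤ devUtil u (s n) i ai) ∧
    ConvergesTo s σ

/-- `bi` weakly dominates `ai` for player `i`. -/
def WeaklyDominates (u : ∀ i : N, (∀ j, A j) → ℝ) (i : N) (bi ai : A i) : Prop :=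
  (∀ a : ∀ j, A j, u i (Function.update a i ai) ≤ u i (Function.update a i bi)) ∧
  ∃ a : ∀ j, A j, u i (Function.update a i ai) < u i (Function.update a i bi)

/-- Undominated Nash equilibrium. -/
def IsUndominatedNash (u : ∀ i : N, (∀ j, A j) → ℝ) (σ : ∀ i, A i → ℝ) : Prop :=
  IsNash u σ ∧ ∀ (i : N) (ai : A i), 0 < σ i ai →
    ¬ ∃ bi : A i, WeaklyDominates u i bi ai

end GameDefs

/-- A regular quantal response function on a finite set of actions `B`:
interiority, continuity, responsiveness, and monotonicity. -/
def IsRegularQRF {B : Type} [Fintype B] [DecidableEq B]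
    (p : (B → ℝ) → (B → ℝ)) : Prop :=
  (∀ x, (∀ a, 0 < p x a) ∧ ∑ a, p x a = 1) ∧
  Continuous p ∧
  (∀ (x : B → ℝ) (η : ℝ) (a : B), 0 < η →
    p x a < p (Function.update x a (x a + η)) a) ∧
  ∀ (x : B → ℝ) (a b : B), x b < x a → p x b < p x a

section QREDefs

variable {N : Type} [Fintype N] [DecidableEq N] {A : N → Type}
  [∀ i, Fintype (A i)] [∀ i, DecidableEq (A i)]

/-- Quantal response equilibrium with respect to a profile of QRFs `p`. -/
def IsQRE (u : ∀ i : N, (∀ j, A j) → ℝ) (p : ∀ i, (A i → ℝ) → (A i → ℝ))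
    (σ : ∀ i, A i → ℝ) : Prop :=
  ∀ i : N, σ i = p i (fun ai => devUtil u σ i ai)

/-- A sequence of profiles of QRFs is utility maximizing in the limit. -/
def UtilityMaximizingInLimit (u : ∀ i : N, (∀ j, A j) → ℝ)
    (p : ℕ → ∀ i, (A i → ℝ) → (A i → ℝ)) : Prop :=
  ∀ (s : ℕ → ∀ i, A i → ℝ) (σ : ∀ i, A i → ℝ),
    (∀ n, IsQRE u (p n) (s n)) → ConvergesTo s σ → IsNash u σ

/-- `σ` is approachable by regular QRE that are utility maximizing in the limit. -/
def ApproachableByRegularQRE (u : ∀ i : N, (∀ j, A j) → ℝ) (σ : ∀ i, A i → ℝ) : Prop :=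
  ∃ p : ℕ → ∀ i, (A i → ℝ) → (A i → ℝ),
    (∀ n i, IsRegularQRF (p n i)) ∧ UtilityMaximizingInLimit u p ∧
    ∃ s : ℕ → ∀ i, A i → ℝ, (∀ n, IsQRE u (p n) (s n)) ∧ ConvergesTo s σ

end QREDefs

/-- A control cost function (van Damme), bundled with its derivative on `(0,1]`. -/
structure ControlCost where
  f : ℝ → ℝ
  f' : ℝ → ℝ
  hasDeriv : ∀ x ∈ Set.Ioc (0:ℝ) 1, HasDerivWithinAt f (f' x) (Set.Ioc (0:ℝ) 1) x
  contDeriv : ContinuousOn f' (Set.Ioc (0:ℝ) 1)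
  anti : StrictAntiOn f (Set.Ioc (0:ℝ) 1)
  convex : StrictConvexOn ℝ (Set.Ioc (0:ℝ) 1) f
  atOne : f 1 = 0
  blowup : Tendsto f (nhdsWithin 0 (Set.Ioi (0:ℝ))) atTop

section Aux

variable {N : Type} [Fintype N] [DecidableEq N] {A : N → Type}
  [∀ i, Fintype (A i)] [∀ i, DecidableEq (A i)]

lemma prod_update_eq (σ : ∀ i, A i → ℝ) (i : N) (g : A i → ℝ) (a : ∀ j, A j) :
    ∏ j, Function.update σ i g j (a j)
      = g (a i) * ∏ j ∈ Finset.univ.erase i, σ j (a j) := by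
  rw [← Finset.mul_prod_erase Finset.univ _ (Finset.mem_univ i)]
  rw [Function.update_self]
  congr 1
  refine Finset.prod_congr rfl fun j hj => ?_
  rw [Function.update_of_ne (Finset.ne_of_mem_erase hj)]

lemma expUtil_update_eq (u : ∀ i : N, (∀ j, A j) → ℝ) (σ : ∀ i, A i → ℝ) (i : N)
    (μ : A i → ℝ) :
    expUtil u (Function.update σ i μ) i = ∑ ai, μ ai * devUtil u σ i ai := by
  have hdev : ∀ ai : A i, devUtil u σ i ai
      = ∑ a : ∀ j, A j, u i a * ((if a i = ai then (1:ℝ) else 0)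
          * ∏ j ∈ Finset.univ.erase i, σ j (a j)) := by
    intro ai
    unfold devUtil expUtil
    refine Finset.sum_congr rfl fun a _ => ?_
    rw [prod_update_eq]
  unfold expUtil
  calc ∑ a : ∀ j, A j, u i a * ∏ j, Function.update σ i μ j (a j)
      = ∑ a : ∀ j, A j, u i a * (μ (a i) * ∏ j ∈ Finset.univ.erase i, σ j (a j)) := by
        refine Finset.sum_congr rfl fun a _ => ?_
        rw [prod_update_eq]
    _ = ∑ ai, μ ai * devUtil u σ i ai := by
        simp only [hdev, Finset.mul_sum]
        rw [Finset.sum_comm]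
        refine Finset.sum_congr rfl fun a _ => ?_
        have : ∀ ai : A i, μ ai * (u i a * ((if a i = ai then (1:ℝ) else 0)
            * ∏ j ∈ Finset.univ.erase i, σ j (a j)))
            = if a i = ai then μ ai * (u i a * ∏ j ∈ Finset.univ.erase i, σ j (a j))
              else 0 := by
          intro ai; split_ifs <;> ring
        simp only [this, Finset.sum_ite_eq, Finset.mem_univ, if_true]
        ring

lemma devUtil_tendsto (u : ∀ i : N, (∀ j, A j) → ℝ) (s : ℕ → ∀ i, A i → ℝ)
    (σ : ∀ i, A i → ℝ) (hconv : ConvergesTo s σ) (i : N) (ai : A i) :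
    Tendsto (fun n => devUtil u (s n) i ai) atTop (𝓝 (devUtil u σ i ai)) := by
  unfold devUtil expUtil
  refine tendsto_finset_sum _ fun a _ => Tendsto.const_mul _ ?_
  refine tendsto_finset_prod _ fun j _ => ?_
  by_cases h : j = i
  · subst h
    simp only [Function.update_self]
    exact tendsto_const_nhds
  · simp only [Function.update_of_ne h]
    exact hconv j (a j)

lemma cc_f_nonneg (cc : ControlCost) {x : ℝ} (hx : x ∈ Set.Ioc (0:ℝ) 1) :
    0 ≤ cc.f x := by
  rcases eq_or_lt_of_le hx.2 with h | h
  · rw [h, cc.atOne]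
  · have := cc.anti hx (by constructor <;> norm_num) h
    rw [cc.atOne] at this
    linarith

lemma cc_deriv_nonpos (cc : ControlCost) {x : ℝ} (hx : x ∈ Set.Ioc (0:ℝ) 1) :
    cc.f' x ≤ 0 := by
  have h := hasDerivWithinAt_iff_tendsto_slope.mp (cc.hasDeriv x hx)
  have hsub : Set.Ioo (0:ℝ) x ⊆ Set.Ioc (0:ℝ) 1 \ {x} := by
    intro y hy
    exact ⟨⟨hy.1, le_trans (le_of_lt hy.2) hx.2⟩, ne_of_lt hy.2⟩
  have h' : Tendsto (slope cc.f x) (𝓝[Set.Ioo (0:ℝ) x] x) (𝓝 (cc.f' x)) :=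
    h.mono_left (nhdsWithin_mono _ hsub)
  have : NeBot (𝓝[Set.Ioo (0:ℝ) x] x) := right_nhdsWithin_Ioo_neBot hx.1
  refine le_of_tendsto h' ?_
  filter_upwards [eventually_mem_nhdsWithin] with y hy
  rw [slope_def_field]
  have h1 : cc.f x ≤ cc.f y :=
    le_of_lt (cc.anti ⟨hy.1, le_trans (le_of_lt hy.2) hx.2⟩ hx hy.2)
  have h2 : y - x < 0 := by linarith [hy.2]
  exact div_nonpos_of_nonneg_of_nonpos (by linarith) (le_of_lt h2)

lemma cc_deriv_ge_slope (cc : ControlCost) {x c : ℝ} (hx : x ∈ Set.Ioc (0:ℝ) 1)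
    (hc : c ∈ Set.Ioo (0:ℝ) x) :
    (cc.f x - cc.f c) / (x - c) ≤ cc.f' x := by
  have hcmem : c ∈ Set.Ioc (0:ℝ) 1 := ⟨hc.1, le_trans (le_of_lt hc.2) hx.2⟩
  have h := hasDerivWithinAt_iff_tendsto_slope.mp (cc.hasDeriv x hx)
  have hsub : Set.Ioo c x ⊆ Set.Ioc (0:ℝ) 1 \ {x} := by
    intro y hy
    exact ⟨⟨lt_trans hc.1 hy.1, le_trans (le_of_lt hy.2) hx.2⟩, ne_of_lt hy.2⟩
  have h' : Tendsto (slope cc.f x) (𝓝[Set.Ioo c x] x) (𝓝 (cc.f' x)) :=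
    h.mono_left (nhdsWithin_mono _ hsub)
  have : NeBot (𝓝[Set.Ioo c x] x) := right_nhdsWithin_Ioo_neBot hc.2
  refine ge_of_tendsto h' ?_
  filter_upwards [eventually_mem_nhdsWithin] with y hy
  rw [slope_def_field]
  have hymem : y ∈ Set.Ioc (0:ℝ) 1 :=
    ⟨lt_trans hc.1 hy.1, le_trans (le_of_lt hy.2) hx.2⟩
  have hsec := (cc.convex.convexOn).secant_mono hx hcmem hymem
    (ne_of_lt hc.2) (ne_of_lt hy.2) (le_of_lt hy.1)
  calc (cc.f x - cc.f c) / (x - c) = (cc.f c - cc.f x) / (c - x) := by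
        rw [← neg_div_neg_eq]; ring_nf
    _ ≤ (cc.f y - cc.f x) / (y - x) := hsec

lemma cc_deriv_lb (cc : ControlCost) {c x : ℝ} (hc : 0 < c) (hcx : c ≤ x)
    (hx1 : x ≤ 1) : -(cc.f (c/2) / (c/2)) ≤ cc.f' x := by
  have hxmem : x ∈ Set.Ioc (0:ℝ) 1 := ⟨lt_of_lt_of_le hc hcx, hx1⟩
  have hc2 : c/2 ∈ Set.Ioo (0:ℝ) x := ⟨by linarith, by linarith⟩
  have h1 := cc_deriv_ge_slope cc hxmem hc2
  have hfx : 0 ≤ cc.f x := cc_f_nonneg cc hxmem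
  have hfc : 0 ≤ cc.f (c/2) := cc_f_nonneg cc ⟨by linarith, by linarith⟩
  have hd1 : (0:ℝ) < c/2 := by linarith
  have hd2 : c/2 ≤ x - c/2 := by linarith
  have h2 : cc.f (c/2) / (x - c/2) ≤ cc.f (c/2) / (c/2) :=
    div_le_div_of_nonneg_left hfc hd1 hd2
  have h3 : -(cc.f (c/2) / (c/2)) ≤ -(cc.f (c/2) / (x - c/2)) := by linarith
  have h4 : -cc.f (c/2) / (x - c/2) ≤ (cc.f x - cc.f (c/2)) / (x - c/2) :=
    (div_le_div_iff_of_pos_right (by linarith : (0:ℝ) < x - c/2)).mpr (by linarith)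
  rw [neg_div] at h4
  linarith

end Aux

/-- limits of equilibria of control cost games with vanishing control
costs (expressed via first-order conditions) are Nash equilibria. -/
theorem vanishing_control_costs_limit_nash {N : Type} [Fintype N] [DecidableEq N] {A : N → Type}
    [∀ i, Fintype (A i)] [∀ i, DecidableEq (A i)] [∀ i, Nonempty (A i)]
    (u : ∀ i : N, (∀ j, A j) → ℝ) (f : ℕ → N → ControlCost)
    (hvan : ∀ i : N, ∀ x ∈ Set.Ioc (0:ℝ) 1,
      Tendsto (fun n => (f n i).f x) atTop (𝓝 0))
    (s : ℕ → ∀ i, A i → ℝ)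
    (hs : ∀ n, IsStrategy (s n) ∧ Interior (s n))
    (hfoc : ∀ (n : ℕ) (i : N) (al ak : A i),
      devUtil u (s n) i al - devUtil u (s n) i ak
        = (f n i).f' (s n i al) - (f n i).f' (s n i ak))
    (σ : ∀ i, A i → ℝ) (hconv : ConvergesTo s σ) :
    IsNash u σ := by
  have hσpos : ∀ i a, 0 ≤ σ i a := fun i a =>
    ge_of_tendsto (hconv i a) (Filter.Eventually.of_forall fun n => (hs n).1.1 i a)
  have hσsum : ∀ i, ∑ a, σ i a = 1 := by
    intro i
    have h1 : Tendsto (fun n => ∑ a, s n i a) atTop (𝓝 (∑ a, σ i a)) :=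
      tendsto_finset_sum _ fun a _ => hconv i a
    have h2 : (fun n => ∑ a, s n i a) = fun _ => (1:ℝ) := funext fun n => (hs n).1.2 i
    rw [h2] at h1
    exact tendsto_nhds_unique h1 tendsto_const_nhds
  have hle1 : ∀ n i (a : A i), s n i a ≤ 1 := by
    intro n i a
    calc s n i a ≤ ∑ b, s n i b :=
          Finset.single_le_sum (fun b _ => (hs n).1.1 i b) (Finset.mem_univ a)
      _ = 1 := (hs n).1.2 i
  have hσle1 : ∀ i (a : A i), σ i a ≤ 1 := fun i a =>
    le_of_tendsto (hconv i a) (Filter.Eventually.of_forall fun n => hle1 n i a)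
  -- Key claim: every action is no better than any action in the support of σ
  have hkey : ∀ (i : N) (ak al : A i), 0 < σ i ak →
      devUtil u σ i al ≤ devUtil u σ i ak := by
    intro i ak al hpos
    by_contra hcon
    push_neg at hcon
    set c := σ i ak with hc
    set d := devUtil u σ i al - devUtil u σ i ak with hdd
    have hd : 0 < d := by simp only [hdd]; linarith
    have h1 : ∀ᶠ n in atTop, c/2 ≤ s n i ak :=
      (hconv i ak).eventually (eventually_ge_nhds (by linarith))
    have h2 : Tendsto (fun n => devUtil u (s n) i al - devUtil u (s n) i ak)
        atTop (𝓝 d) :=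
      ((devUtil_tendsto u s σ hconv i al).sub (devUtil_tendsto u s σ hconv i ak))
    have h3 : ∀ᶠ n in atTop,
        d/2 ≤ devUtil u (s n) i al - devUtil u (s n) i ak :=
      h2.eventually (eventually_ge_nhds (by linarith))
    have hc4 : (0:ℝ) < c/4 := by linarith
    have h4 : Tendsto (fun n => (f n i).f (c/2/2) / (c/2/2)) atTop (𝓝 0) := by
      have := (hvan i (c/2/2) ⟨by linarith, by linarith [hσle1 i ak]⟩).div_const
        (c/2/2)
      simpa using this
    have h5 : ∀ᶠ n in atTop, (f n i).f (c/2/2) / (c/2/2) < d/2 :=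
      h4.eventually (eventually_lt_nhds (by linarith))
    obtain ⟨n, hn1, hn3, hn5⟩ := (h1.and (h3.and h5)).exists
    have hfoc' := hfoc n i al ak
    have hal : s n i al ∈ Set.Ioc (0:ℝ) 1 := ⟨(hs n).2 i al, hle1 n i al⟩
    have hup : (f n i).f' (s n i al) ≤ 0 := cc_deriv_nonpos (f n i) hal
    have hlo : -((f n i).f (c/2/2) / (c/2/2)) ≤ (f n i).f' (s n i ak) :=
      cc_deriv_lb (f n i) (by linarith : (0:ℝ) < c/2) hn1 (hle1 n i ak)
    linarith
  refine ⟨⟨hσpos, hσsum⟩, ?_⟩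
  intro i μ hμ0 hμ1
  obtain ⟨ak, hak⟩ : ∃ ak, 0 < σ i ak := by
    by_contra hall
    push_neg at hall
    have : ∑ a, σ i a = 0 :=
      Finset.sum_eq_zero fun a _ => le_antisymm (hall a) (hσpos i a)
    rw [hσsum i] at this
    norm_num at this
  calc expUtil u (Function.update σ i μ) i
      = ∑ a, μ a * devUtil u σ i a := expUtil_update_eq u σ i μ
    _ ≤ ∑ a, μ a * devUtil u σ i ak :=
        Finset.sum_le_sum fun a _ =>
          mul_le_mul_of_nonneg_left (hkey i ak a hak) (hμ0 a)
    _ = devUtil u σ i ak := by rw [← Finset.sum_mul, hμ1, one_mul]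
    _ = ∑ a, σ i a * devUtil u σ i ak := by rw [← Finset.sum_mul, hσsum i, one_mul]
    _ ≤ ∑ a, σ i a * devUtil u σ i a := by
        refine Finset.sum_le_sum fun a _ => ?_
        rcases (hσpos i a).eq_or_lt with h | h
        · rw [← h]; simp
        · exact mul_le_mul_of_nonneg_left (hkey i a ak h) (le_of_lt h)
    _ = expUtil u σ i := by
        rw [← expUtil_update_eq u σ i (σ i), Function.update_eq_self]
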